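/- Run OMP(A, b) with termination parameter ε = 0, where b is a nonzero vector lying in the column space of A. Then at every iteration k reached by the algorithm, the columns of A indexed by the support set T_k are linearly independent. -/

import Mathlib

open scoped RealInnerProductSpace Classical

noncomputable section

namespace SSCOMP

variable {D : ℕ}

noncomputable def ompSelect {ι : Type*} [Fintype ι] [LinearOrder ι] [Nonempty ι]
    (a : ι → EuclideanSpace ℝ (Fin D)) (q : EuclideanSpace ℝ (Fin D)) : ι :=
  (Finset.univ.filter fun i => ∀ m, |⟪a m, q⟫| ≤ |⟪a i, q⟫|).min' (by
    obtain ⟨i, -, hi⟩ := Finset.exists_max_image (Finset.univ : Finset ι)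
      (fun m => |⟪a m, q⟫|) Finset.univ_nonempty
    exact ⟨i, Finset.mem_filter.mpr ⟨Finset.mem_univ i, fun m => hi m (Finset.mem_univ m)⟩⟩)

noncomputable def ompState {ι : Type*} [Fintype ι] [LinearOrder ι]
    (a : ι → EuclideanSpace ℝ (Fin D)) (b : EuclideanSpace ℝ (Fin D)) :
    ℕ → Finset ι × EuclideanSpace ℝ (Fin D)
  | 0 => (∅, b)
  | k + 1 =>
    let s := ompState a b k
    if s.2 = 0 then s
    else if h : Nonempty ι then
      haveI := h
      let T' : Finset ι := insert (ompSelect a s.2) s.1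
      (T', b - (Submodule.orthogonalProjectionOnto (Submodule.span ℝ (a '' (T' : Set ι))) b :
        EuclideanSpace ℝ (Fin D)))
    else s

noncomputable def ompSupport {ι : Type*} [Fintype ι] [LinearOrder ι]
    (a : ι → EuclideanSpace ℝ (Fin D)) (b : EuclideanSpace ℝ (Fin D)) (k : ℕ) : Finset ι :=
  (ompState a b k).1

noncomputable def ompResidual {ι : Type*} [Fintype ι] [LinearOrder ι]
    (a : ι → EuclideanSpace ℝ (Fin D)) (b : EuclideanSpace ℝ (Fin D)) (k : ℕ) :
    EuclideanSpace ℝ (Fin D) :=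
  (ompState a b k).2

def IsOMPOutput {ι : Type*} [Fintype ι] [LinearOrder ι]
    (a : ι → EuclideanSpace ℝ (Fin D)) (b : EuclideanSpace ℝ (Fin D)) (kmax : ℕ)
    (c : ι → ℝ) : Prop :=
  (∀ m, c m ≠ 0 → m ∈ ompSupport a b kmax) ∧
  ∀ c' : ι → ℝ, (∀ m, c' m ≠ 0 → m ∈ ompSupport a b kmax) →
    ‖b - ∑ m, c m • a m‖ ≤ ‖b - ∑ m, c' m • a m‖

/-- Set of normalized nonzero residual directions of OMP(a, b) run with `ε = 0`
and `k_max` large enough. -/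
noncomputable def residualDirs {ι : Type*} [Fintype ι] [LinearOrder ι]
    (a : ι → EuclideanSpace ℝ (Fin D)) (b : EuclideanSpace ℝ (Fin D)) :
    Set (EuclideanSpace ℝ (Fin D)) :=
  {w | ∃ k, ompResidual a b k ≠ 0 ∧ w = ‖ompResidual a b k‖⁻¹ • ompResidual a b k}

/-- Coherence between two sets of unit-norm points. -/
noncomputable def coherence (A B : Set (EuclideanSpace ℝ (Fin D))) : ℝ :=
  sSup {r : ℝ | ∃ u ∈ A, ∃ v ∈ B, r = |⟪u, v⟫|}

/-- Symmetrized convex hull `conv(±A)`. -/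
noncomputable def symmHull (A : Set (EuclideanSpace ℝ (Fin D))) :
    Set (EuclideanSpace ℝ (Fin D)) :=
  convexHull ℝ (A ∪ (-A))

/-- Inradius of a convex body: the radius of the largest Euclidean ball
(within the linear span of the body) inscribed in it. -/
noncomputable def inradius (P : Set (EuclideanSpace ℝ (Fin D))) : ℝ :=
  sSup {r : ℝ | 0 ≤ r ∧ ∃ c ∈ Submodule.span ℝ P,
    ∀ y ∈ Submodule.span ℝ P, ‖y - c‖ ≤ r → y ∈ P}

variable {n N : ℕ}

/-- `X^i`: the set of data points lying in the `i`-th subspace. -/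
noncomputable def subX (S : Fin n → Submodule ℝ (EuclideanSpace ℝ (Fin D)))
    (x : Fin N → EuclideanSpace ℝ (Fin D)) (i : Fin n) : Set (EuclideanSpace ℝ (Fin D)) :=
  x '' {m | x m ∈ S i}

/-- `X^i_{-j}`: the set of data points lying in the `i`-th subspace, with `x j` removed. -/
noncomputable def subXmin (S : Fin n → Submodule ℝ (EuclideanSpace ℝ (Fin D)))
    (x : Fin N → EuclideanSpace ℝ (Fin D)) (i : Fin n) (j : Fin N) :
    Set (EuclideanSpace ℝ (Fin D)) :=
  x '' {m | x m ∈ S i ∧ m ≠ j}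

/-- `W_j^i`: the set of OMP residual directions associated with `X^i_{-j}` and `x j`. -/
noncomputable def Wji (S : Fin n → Submodule ℝ (EuclideanSpace ℝ (Fin D)))
    (x : Fin N → EuclideanSpace ℝ (Fin D)) (i : Fin n) (j : Fin N) :
    Set (EuclideanSpace ℝ (Fin D)) :=
  residualDirs (fun m : {m : Fin N // x m ∈ S i ∧ m ≠ j} => x m.1) (x j)

/-- `W^i`: the set of OMP residual directions associated with `X^i`. -/
noncomputable def Wfull (S : Fin n → Submodule ℝ (EuclideanSpace ℝ (Fin D)))
    (x : Fin N → EuclideanSpace ℝ (Fin D)) (i : Fin n) : Set (EuclideanSpace ℝ (Fin D)) :=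
  ⋃ j ∈ {j : Fin N | x j ∈ S i}, Wji S x i j

/-- `r_i := min_{j : x_j ∈ S_i} r(P^i_{-j})`. -/
noncomputable def rMin (S : Fin n → Submodule ℝ (EuclideanSpace ℝ (Fin D)))
    (x : Fin N → EuclideanSpace ℝ (Fin D)) (i : Fin n) : ℝ :=
  sInf {r : ℝ | ∃ j, x j ∈ S i ∧ r = inradius (symmHull (subXmin S x i j))}

/-- Cosine of the principal angle between two subspaces. -/
noncomputable def cosAngle (Si Sk : Submodule ℝ (EuclideanSpace ℝ (Fin D))) : ℝ :=
  sSup {r : ℝ | ∃ u ∈ Si, ∃ v ∈ Sk, ‖u‖ = 1 ∧ ‖v‖ = 1 ∧ r = ⟪u, v⟫}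

/-! The residual `q_k = b - P_{T_k} b` is orthogonal to the columns indexed by `T_k` and, since `b`
lies in the column space, it lies there too. Hence while `q_k ≠ 0` some column correlates with it,
so the greedily selected column does as well and cannot lie in the span of the columns already
selected: adding it keeps the selected columns linearly independent. -/

open Submodule

theorem exists_inner_ne_zero_of_mem_span {E ι : Type*} [NormedAddCommGroup E]
    [InnerProductSpace ℝ E] {a : ι → E} {v : E} (hv : v ∈ span ℝ (Set.range a))
    (hv0 : v ≠ 0) : ∃ i, ⟪a i, v⟫ ≠ 0 := by
  by_contra! h
  have hle : span ℝ (Set.range a) ≤ (ℝ ∙ v)ᗮ :=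
    span_le.mpr <| Set.range_subset_iff.mpr fun i =>
      mem_orthogonal_singleton_iff_inner_left.mpr (h i)
  exact hv0 (inner_self_eq_zero.mp (mem_orthogonal_singleton_iff_inner_right.mp (hle hv)))

section

variable {ι : Type*} [Fintype ι] [LinearOrder ι]
  (a : ι → EuclideanSpace ℝ (Fin D)) (b : EuclideanSpace ℝ (Fin D))

theorem abs_inner_le_ompSelect [Nonempty ι] (q : EuclideanSpace ℝ (Fin D)) (m : ι) :
    |⟪a m, q⟫| ≤ |⟪a (ompSelect a q), q⟫| := by
  unfold ompSelect
  exact (Finset.mem_filter.mp (Finset.min'_mem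
    (Finset.univ.filter fun i => ∀ m, |⟪a m, q⟫| ≤ |⟪a i, q⟫|) _)).2 m

theorem inner_ompSelect_ne_zero [Nonempty ι] {q : EuclideanSpace ℝ (Fin D)} {i : ι}
    (hi : ⟪a i, q⟫ ≠ 0) : ⟪a (ompSelect a q), q⟫ ≠ 0 :=
  abs_pos.mp ((abs_pos.mpr hi).trans_le (abs_inner_le_ompSelect a q i))

theorem ompState_succ_of_ne_zero [Nonempty ι] {k : ℕ} (hq : ompResidual a b k ≠ 0) :
    ompState a b (k + 1) =
      (insert (ompSelect a (ompResidual a b k)) (ompSupport a b k),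
        b - (span ℝ (a '' ↑(insert (ompSelect a (ompResidual a b k))
          (ompSupport a b k)))).starProjection b) := by
  rw [ompResidual] at hq
  rw [ompState, if_neg hq, dif_pos ‹_›]
  rfl

theorem ompState_succ_of_not {k : ℕ} (h : ¬(Nonempty ι ∧ ompResidual a b k ≠ 0)) :
    ompState a b (k + 1) = ompState a b k := by
  rw [ompState]
  split_ifs with hq hι
  · rfl
  · exact absurd ⟨hι, hq⟩ h
  · rfl

theorem ompResidual_eq (k : ℕ) :
    ompResidual a b k = b - (span ℝ (a '' ↑(ompSupport a b k))).starProjection b := by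
  induction k with
  | zero => simp [ompResidual, ompSupport, ompState]
  | succ k ih =>
    by_cases h : Nonempty ι ∧ ompResidual a b k ≠ 0
    · obtain ⟨_, hq⟩ := h
      simp only [ompResidual, ompSupport, ompState_succ_of_ne_zero a b hq]
    · simpa only [ompResidual, ompSupport, ompState_succ_of_not a b h] using ih

theorem ompResidual_mem_orthogonal (k : ℕ) :
    ompResidual a b k ∈ (span ℝ (a '' ↑(ompSupport a b k)))ᗮ := by
  rw [ompResidual_eq]
  exact sub_starProjection_mem_orthogonal b

theorem ompResidual_mem_span (hb : b ∈ span ℝ (Set.range a)) (k : ℕ) :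
    ompResidual a b k ∈ span ℝ (Set.range a) := by
  rw [ompResidual_eq]
  exact sub_mem hb (span_mono (Set.image_subset_range a _) (starProjection_apply_mem _ b))

theorem ompSelect_notMem_span [Nonempty ι] (hb : b ∈ span ℝ (Set.range a)) {k : ℕ}
    (hq : ompResidual a b k ≠ 0) :
    a (ompSelect a (ompResidual a b k)) ∉ span ℝ (a '' ↑(ompSupport a b k)) := by
  obtain ⟨i, hi⟩ := exists_inner_ne_zero_of_mem_span (ompResidual_mem_span a b hb k) hq
  exact fun hmem => inner_ompSelect_ne_zero a hi
    (inner_right_of_mem_orthogonal hmem (ompResidual_mem_orthogonal a b k))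

theorem ompSupport_linearIndepOn (hb : b ∈ span ℝ (Set.range a)) (k : ℕ) :
    LinearIndepOn ℝ a (ompSupport a b k : Set ι) := by
  induction k with
  | zero => simp [ompSupport, ompState]
  | succ k ih =>
    by_cases h : Nonempty ι ∧ ompResidual a b k ≠ 0
    · obtain ⟨_, hq⟩ := h
      rw [ompSupport, ompState_succ_of_ne_zero a b hq, Finset.coe_insert]
      exact ih.insert (ompSelect_notMem_span a b hb hq)
    · rwa [ompSupport, ompState_succ_of_not a b h]

end

theorem omp_support_linearIndependent_general
    {D : ℕ} {ι : Type*} [Fintype ι] [LinearOrder ι]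
    (a : ι → EuclideanSpace ℝ (Fin D)) (b : EuclideanSpace ℝ (Fin D))
    (hspan : b ∈ Submodule.span ℝ (Set.range a)) :
    ∀ k : ℕ, LinearIndependent ℝ (fun m : {t : ι // t ∈ ompSupport a b k} => a m.1) :=
  ompSupport_linearIndepOn a b hspan

/-- Run OMP(A, b) with `ε = 0`, where `b` is a nonzero vector in the column
space of `A`. Then at every iteration reached by the algorithm, the columns of `A` indexed by
the support set `T_k` are linearly independent. -/
theorem omp_support_linearIndependent
    {D : ℕ} {ι : Type*} [Fintype ι] [LinearOrder ι]
    (a : ι → EuclideanSpace ℝ (Fin D)) (b : EuclideanSpace ℝ (Fin D))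
    (hb : b ≠ 0) (hspan : b ∈ Submodule.span ℝ (Set.range a)) :
    ∀ k : ℕ, LinearIndependent ℝ (fun m : {t : ι // t ∈ ompSupport a b k} => a m.1) :=
  omp_support_linearIndependent_general a b hspan

end SSCOMP
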